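/- With E_7 ⊂ Pic_7 as above, the set {α_{ij} : 1 ≤ i < j ≤ 7} ∪ {β_i : 1 ≤ i ≤ 7} of 28 positive roots, together with their negatives, forms a root subsystem of E_7 of type A_7. -/

import Mathlib

def picDot {n : ℕ} (v w : Fin (n + 1) → ℤ) : ℤ :=
  v 0 * w 0 - ∑ i : Fin n, v i.succ * w i.succ

def picH (n : ℕ) : Fin (n + 1) → ℤ := fun j => if j = 0 then 1 else 0

def picE (n : ℕ) (i : Fin n) : Fin (n + 1) → ℤ := fun j => if j = i.succ then 1 else 0

def K7 : Fin 8 → ℤ := (-3 : ℤ) • picH 7 + ∑ i : Fin 7, picE 7 i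

/-- The 56 vectors `±α_{ij} = ±(eᵢ − eⱼ)` and `±βᵢ = ±(2h − Σ_{j≠i} eⱼ)`. -/
def A7inE7 : Set (Fin 8 → ℤ) :=
  {α | (∃ i j : Fin 7, i ≠ j ∧ α = picE 7 i - picE 7 j) ∨
       (∃ i : Fin 7, α = (2 : ℤ) • picH 7 - ∑ j ∈ Finset.univ.erase i, picE 7 j) ∨
       (∃ i : Fin 7, α = -((2 : ℤ) • picH 7 - ∑ j ∈ Finset.univ.erase i, picE 7 j))}

def stdVec (i : Fin 8) : Fin 8 → ℤ := fun j => if j = i then 1 else 0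

def dotZ (v w : Fin 8 → ℤ) : ℤ := ∑ i, v i * w i

def A7std : Set (Fin 8 → ℤ) :=
  {v | ∃ i j : Fin 8, i ≠ j ∧ v = stdVec i - stdVec j}

/-!
The linear map `ℤ⁸ → Pic₇` sending `εₖ ↦ eₖ` (`k < 7`) and `ε₇ ↦ Σ eⱼ − 2h` carries `εᵢ − εⱼ` to
`α_{ij}` and `εᵢ − ε₇` to `βᵢ`, so the 56 vectors are exactly the image of the `A₇` roots. On the
hyperplane `Σ xₖ = 0`, which contains those roots, the map lands in `K₇^⊥` and turns the standard
dot product into minus the intersection form. Hence reflections in `Pic₇` correspond to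
reflections of `ℤ⁸`, which permute coordinates by a transposition and so preserve the `A₇` roots.
-/

section RootsOfTypeA

variable (ι : Type*) [DecidableEq ι]

def rootsOfTypeA : Set (ι → ℤ) :=
  {v | ∃ i j : ι, i ≠ j ∧ v = Pi.single i 1 - Pi.single j 1}

variable {ι}

theorem single_sub_single_injective {i j k l : ι} (hij : i ≠ j)
    (h : (Pi.single i 1 - Pi.single j 1 : ι → ℤ) = Pi.single k 1 - Pi.single l 1) :
    i = k ∧ j = l := by
  have hi := congrFun h i
  have hj := congrFun h j
  simp only [Pi.sub_apply, Pi.single_apply] at hi hj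
  split_ifs at hi hj <;> simp_all

variable [Fintype ι]

theorem single_sub_single_dotProduct (i j : ι) (v : ι → ℤ) :
    (Pi.single i 1 - Pi.single j 1) ⬝ᵥ v = v i - v j := by
  simp [sub_dotProduct]

theorem sub_dotProduct_smul_single_sub_single (i j : ι) (v : ι → ℤ) :
    v - ((Pi.single i 1 - Pi.single j 1) ⬝ᵥ v) • (Pi.single i 1 - Pi.single j 1)
      = v ∘ Equiv.swap i j := by
  rw [single_sub_single_dotProduct]
  funext k
  simp only [Pi.sub_apply, Pi.smul_apply, Pi.single_apply, Function.comp_apply,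
    Equiv.swap_apply_def, smul_eq_mul]
  split_ifs <;> simp_all

theorem sub_dotProduct_smul_mem_rootsOfTypeA {a v : ι → ℤ} (ha : a ∈ rootsOfTypeA ι)
    (hv : v ∈ rootsOfTypeA ι) : v - (a ⬝ᵥ v) • a ∈ rootsOfTypeA ι := by
  obtain ⟨i, j, -, rfl⟩ := ha
  obtain ⟨k, l, hkl, rfl⟩ := hv
  refine ⟨Equiv.swap i j k, Equiv.swap i j l, (Equiv.swap i j).injective.ne hkl, ?_⟩
  rw [sub_dotProduct_smul_single_sub_single, Pi.sub_comp, Pi.single_comp_equiv,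
    Pi.single_comp_equiv, Equiv.symm_swap]

theorem dotProduct_self_of_mem_rootsOfTypeA {a : ι → ℤ} (ha : a ∈ rootsOfTypeA ι) :
    a ⬝ᵥ a = 2 := by
  obtain ⟨i, j, hij, rfl⟩ := ha
  rw [single_sub_single_dotProduct]
  simp [hij, hij.symm]

theorem sum_eq_zero_of_mem_rootsOfTypeA {a : ι → ℤ} (ha : a ∈ rootsOfTypeA ι) :
    ∑ k, a k = 0 := by
  obtain ⟨i, j, -, rfl⟩ := ha
  simp [Finset.sum_sub_distrib]

theorem ncard_rootsOfTypeA :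
    (rootsOfTypeA ι).ncard = Fintype.card ι * Fintype.card ι - Fintype.card ι := by
  have himage : rootsOfTypeA ι = (fun p : ι × ι => Pi.single p.1 1 - Pi.single p.2 1) ''
      ((Finset.univ.offDiag : Finset (ι × ι)) : Set (ι × ι)) := by
    ext v
    simp [rootsOfTypeA, eq_comm]
  rw [himage, Set.InjOn.ncard_image, Set.ncard_coe_finset, Finset.offDiag_card,
    Finset.card_univ]
  rintro ⟨i, j⟩ hij ⟨k, l⟩ - h
  obtain ⟨rfl, rfl⟩ := single_sub_single_injective (by simpa using hij) h
  rfl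

end RootsOfTypeA

theorem A7std_eq_rootsOfTypeA : A7std = rootsOfTypeA (Fin 8) := by
  have hstd : ∀ i, stdVec i = Pi.single i 1 := fun i =>
    funext fun j => (Pi.single_apply i 1 j).symm
  simp only [A7std, rootsOfTypeA, hstd]

/-- In `Pic₇` coordinates `(h, e₀, …, e₆)`: `εₖ ↦ eₖ` for `k < 7` and `ε₇ ↦ Σ eⱼ − 2h`. -/
def picEmb : (Fin 8 → ℤ) →ₗ[ℤ] (Fin 8 → ℤ) where
  toFun x := Fin.cons (-2 * x 7) fun k => x k.castSucc + x 7
  map_add' x y := by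
    funext m
    cases m using Fin.cases <;> simp only [Pi.add_apply, Fin.cons_zero, Fin.cons_succ] <;> ring
  map_smul' c x := by
    funext m
    cases m using Fin.cases <;>
      simp only [Pi.smul_apply, smul_eq_mul, RingHom.id_apply, Fin.cons_zero, Fin.cons_succ] <;>
      ring

theorem picEmb_injective : Function.Injective picEmb := by
  intro x y h
  have h0 := congrFun h 0
  simp only [picEmb, LinearMap.coe_mk, AddHom.coe_mk, Fin.cons_zero] at h0
  funext m
  cases m using Fin.lastCases with
  | last => exact mul_left_cancel₀ (by norm_num) h0
  | cast k =>
    have hk := congrFun h k.succ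
    simp only [picEmb, LinearMap.coe_mk, AddHom.coe_mk, Fin.cons_succ] at hk
    omega

theorem castSucc_ne_seven (k : Fin 7) : k.castSucc ≠ (7 : Fin 8) := (Fin.castSucc_lt_last k).ne

theorem picEmb_single_castSucc (k : Fin 7) : picEmb (Pi.single k.castSucc 1) = picE 7 k := by
  funext m
  cases m using Fin.cases <;>
    simp [picEmb, picE, Pi.single_apply, (castSucc_ne_seven k).symm, (Fin.succ_ne_zero k).symm]

theorem picEmb_single_seven : picEmb (Pi.single 7 1) = ∑ k, picE 7 k - 2 • picH 7 := by
  funext m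
  cases m using Fin.cases with
  | zero => simp [picEmb, picE, picH, Finset.sum_apply, eq_comm (a := (0 : Fin 8))]
  | succ k => simp [picEmb, picE, picH, Finset.sum_apply, castSucc_ne_seven]

theorem picEmb_single_sub_single_seven (i : Fin 7) :
    picEmb (Pi.single i.castSucc 1 - Pi.single 7 1)
      = (2 : ℤ) • picH 7 - ∑ j ∈ Finset.univ.erase i, picE 7 j := by
  rw [map_sub, picEmb_single_castSucc, picEmb_single_seven,
    Finset.sum_erase_eq_sub (Finset.mem_univ i)]
  abel

theorem K7_zero : K7 0 = -3 := by
  simp [K7, picH, picE, eq_comm (a := (0 : Fin 8))]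

theorem K7_succ (k : Fin 7) : K7 k.succ = 1 := by
  simp [K7, picH, picE, Finset.sum_apply]

theorem sum_fin_eight (x : Fin 8 → ℤ) : ∑ k, x k = ∑ k : Fin 7, x k.castSucc + x 7 :=
  Fin.sum_univ_castSucc x

theorem picDot_picEmb_K7 (x : Fin 8 → ℤ) : picDot (picEmb x) K7 = -∑ k, x k := by
  rw [sum_fin_eight]
  simp only [picDot, picEmb, LinearMap.coe_mk, AddHom.coe_mk, Fin.cons_zero, Fin.cons_succ,
    K7_zero, K7_succ, mul_one, Finset.sum_add_distrib, Finset.sum_const, Finset.card_univ,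
    Fintype.card_fin]
  ring

theorem picDot_picEmb {x y : Fin 8 → ℤ} (hx : ∑ k, x k = 0) (hy : ∑ k, y k = 0) :
    picDot (picEmb x) (picEmb y) = -(x ⬝ᵥ y) := by
  rw [sum_fin_eight] at hx hy
  rw [dotProduct, sum_fin_eight]
  simp only [picDot, picEmb, LinearMap.coe_mk, AddHom.coe_mk, Fin.cons_zero, Fin.cons_succ,
    add_mul, mul_add, Finset.sum_add_distrib, ← Finset.sum_mul, ← Finset.mul_sum,
    Finset.sum_const, Finset.card_univ, Fintype.card_fin]
  linear_combination -(x 7 * hy) - y 7 * hx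

theorem picEmb_sub_dotProduct_smul {a v : Fin 8 → ℤ} (ha : ∑ k, a k = 0)
    (hv : ∑ k, v k = 0) :
    picEmb (v - (a ⬝ᵥ v) • a) = picEmb v + picDot (picEmb a) (picEmb v) • picEmb a := by
  rw [picDot_picEmb ha hv, map_sub, map_smul, neg_smul, sub_eq_add_neg]

theorem A7inE7_eq_image : A7inE7 = picEmb '' rootsOfTypeA (Fin 8) := by
  ext v
  constructor
  · rintro (⟨i, j, hij, rfl⟩ | ⟨i, rfl⟩ | ⟨i, rfl⟩)
    · refine ⟨_, ⟨i.castSucc, j.castSucc, Fin.castSucc_injective _ |>.ne hij, rfl⟩, ?_⟩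
      rw [map_sub, picEmb_single_castSucc, picEmb_single_castSucc]
    · exact ⟨_, ⟨i.castSucc, 7, castSucc_ne_seven i, rfl⟩, picEmb_single_sub_single_seven i⟩
    · refine ⟨_, ⟨7, i.castSucc, (castSucc_ne_seven i).symm, rfl⟩, ?_⟩
      rw [← neg_sub, map_neg, picEmb_single_sub_single_seven]
  · rintro ⟨_, ⟨i, j, hij, rfl⟩, rfl⟩
    induction i using Fin.lastCases with
    | last =>
      induction j using Fin.lastCases with
      | last => exact absurd rfl hij
      | cast j =>
        refine Or.inr (Or.inr ⟨j, ?_⟩)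
        rw [← picEmb_single_sub_single_seven, ← map_neg, neg_sub]
        rfl
    | cast i =>
      induction j using Fin.lastCases with
      | last => exact Or.inr (Or.inl ⟨i, picEmb_single_sub_single_seven i⟩)
      | cast j =>
        refine Or.inl ⟨i, j, fun h => hij (congrArg _ h), ?_⟩
        rw [map_sub, picEmb_single_castSucc, picEmb_single_castSucc]

/-- The 28 positive roots `α_{ij}` (`i<j`) and `βᵢ`, together with their negatives, form a
root subsystem of `E₇ ⊂ Pic₇` of type `A₇`: all 56 vectors are roots of `E₇`, the set is
closed under the reflections `s_α(x) = x + (α,x)α`, and there is a bijection onto the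
roots of `A₇` carrying the intersection form to minus the standard form. -/
theorem A7_subsystem_of_E7 :
    (∀ α ∈ A7inE7, picDot α K7 = 0 ∧ picDot α α = -2) ∧
    (∀ α ∈ A7inE7, ∀ x ∈ A7inE7, x + picDot α x • α ∈ A7inE7) ∧
    A7inE7.ncard = 56 ∧
    (∃ f : (Fin 8 → ℤ) → (Fin 8 → ℤ),
      Set.BijOn f A7inE7 A7std ∧
      ∀ α ∈ A7inE7, ∀ β ∈ A7inE7, dotZ (f α) (f β) = -picDot α β) := by
  have hbij := picEmb_injective.injOn.bijOn_image (s := rootsOfTypeA (Fin 8))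
  rw [A7inE7_eq_image, A7std_eq_rootsOfTypeA]
  refine ⟨?_, ?_, ?_, Function.invFunOn picEmb (rootsOfTypeA (Fin 8)),
    hbij.symm hbij.invOn_invFunOn.symm, ?_⟩
  · rintro _ ⟨a, ha, rfl⟩
    have hsum := sum_eq_zero_of_mem_rootsOfTypeA ha
    rw [picDot_picEmb_K7, hsum, picDot_picEmb hsum hsum, dotProduct_self_of_mem_rootsOfTypeA ha]
    exact ⟨neg_zero, rfl⟩
  · rintro _ ⟨a, ha, rfl⟩ _ ⟨v, hv, rfl⟩
    exact ⟨_, sub_dotProduct_smul_mem_rootsOfTypeA ha hv, picEmb_sub_dotProduct_smul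
      (sum_eq_zero_of_mem_rootsOfTypeA ha) (sum_eq_zero_of_mem_rootsOfTypeA hv)⟩
  · rw [Set.ncard_image_of_injective _ picEmb_injective, ncard_rootsOfTypeA]
    rfl
  · rintro _ ⟨a, ha, rfl⟩ _ ⟨b, hb, rfl⟩
    rw [hbij.invOn_invFunOn.1 ha, hbij.invOn_invFunOn.1 hb, picDot_picEmb
      (sum_eq_zero_of_mem_rootsOfTypeA ha) (sum_eq_zero_of_mem_rootsOfTypeA hb), neg_neg]
    rfl
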